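/- arXiv:2307.14528 — 8 statements merged into one kernel-verified Lean document; each statement's English description precedes it below -/
import Mathlib

section
/- Let f_x be star-convex around w^*, i.e., f_x(w^*) ≥ f_x(w) + ⟨∇f_x(w), w^* - w⟩ for all w. Then one step of SPS₊, namely w^{t+1} = w^t - [(f_x(w^t) - f_x(w^*))₊ / ‖∇f_x(w^t)‖²] ∇f_x(w^t), satisfies ‖w^{t+1} - w^*‖² ≤ ‖w^t - w^*‖² - (f_x(w^t) - f_x(w^*))₊² / ‖∇f_x(w^t)‖² (Fejér monotonicity). -/
open RealInnerProductSpace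

/-- Fejér monotonicity of one SPS₊ step under star-convexity. -/
theorem stmt_1 (d : ℕ) (fx : EuclideanSpace ℝ (Fin d) → ℝ)
    (hdiff : Differentiable ℝ fx)
    (wt wstar : EuclideanSpace ℝ (Fin d))
    (hstar : ∀ w, fx wstar ≥ fx w + ⟪gradient fx w, wstar - w⟫)
    (hgrad : gradient fx wt ≠ 0)
    (wnext : EuclideanSpace ℝ (Fin d))
    (hupd : wnext = wt -
      (max (fx wt - fx wstar) 0 / ‖gradient fx wt‖ ^ 2) • gradient fx wt) :
    ‖wnext - wstar‖ ^ 2 ≤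
      ‖wt - wstar‖ ^ 2 - (max (fx wt - fx wstar) 0) ^ 2 / ‖gradient fx wt‖ ^ 2 := by
  set g := gradient fx wt with hg
  set h := max (fx wt - fx wstar) 0 with hh
  set γ := h / ‖g‖ ^ 2 with hγ
  have hgn : (0:ℝ) < ‖g‖ := norm_pos_iff.mpr hgrad
  have hgpos : (0:ℝ) < ‖g‖ ^ 2 := by positivity
  have hI : (fx wt - fx wstar) ≤ ⟪g, wt - wstar⟫ := by
    have := hstar wt
    have hin : ⟪g, wstar - wt⟫ = -⟪g, wt - wstar⟫ := by
      rw [← inner_neg_right]; congr 1; abel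
    rw [hin] at this
    linarith
  have hkey : h * h ≤ h * ⟪g, wt - wstar⟫ := by
    rcases le_or_gt (fx wt - fx wstar) 0 with hc | hc
    · have : h = 0 := max_eq_right hc
      simp [this]
    · have hhe : h = fx wt - fx wstar := max_eq_left hc.le
      nlinarith [hc, hI]
  have hexp : wnext - wstar = (wt - wstar) - γ • g := by
    rw [hupd]; abel
  rw [hexp, norm_sub_sq_real, real_inner_smul_right, norm_smul, mul_pow]
  have hng : ‖γ‖ ^ 2 * ‖g‖ ^ 2 = h ^ 2 / ‖g‖ ^ 2 := by
    rw [Real.norm_eq_abs, sq_abs, hγ]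
    field_simp
  rw [hng, real_inner_comm g (wt - wstar)]
  have h2 : h ^ 2 / ‖g‖ ^ 2 ≤ γ * ⟪g, wt - wstar⟫ := by
    rw [hγ, div_mul_eq_mul_div, pow_two]
    exact (div_le_div_iff_of_pos_right hgpos).mpr hkey
  linarith
end

section
/- Let y^0, a ∈ ℝ^p, c ∈ ℝ, β > 0. The minimizer over y ∈ ℝ^p of (c + ⟨a, y - y^0⟩)₊ + (1/(2β)) ‖y - y^0‖² is y⁺ = y^0 - min{β, (c)₊/‖a‖²} · a (with the convention that the minimum equals β if a = 0 and c > 0, and y⁺ = y^0 if c ≤ 0). -/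
open RealInnerProductSpace

/-!
Weak duality for the proximal step of the hinge function. Writing `(z)₊ = max_{s ∈ [0,1]} s z`
and minimizing the quadratic in `u = y - y⁰` for fixed `s` gives the lower bound
`s c - β s² ‖a‖² / 2` for the objective. The point `y⁰ - β s a` attains this bound as soon as `s`
is a subgradient of `(·)₊` at `c - β s ‖a‖²`, i.e. `s z = (z)₊` there, and for `a ≠ 0` the
step `β s = min {β, (c)₊ / ‖a‖²}` is exactly such a choice.
-/

lemma mul_le_max_zero {s : ℝ} (hs₀ : 0 ≤ s) (hs₁ : s ≤ 1) (z : ℝ) : s * z ≤ max z 0 := by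
  rcases le_total 0 z with hz | hz
  · exact (mul_le_of_le_one_left hz hs₁).trans (le_max_left z 0)
  · exact (mul_nonpos_of_nonneg_of_nonpos hs₀ hz).trans (le_max_right z 0)

section HingeProx

variable {E : Type*} [NormedAddCommGroup E] [InnerProductSpace ℝ E]

lemma neg_young_le_real_inner {β : ℝ} (hβ : 0 < β) (v u : E) :
    -(β * ‖v‖ ^ 2 / 2 + ‖u‖ ^ 2 / (2 * β)) ≤ ⟪v, u⟫ := by
  have amgm : ‖v‖ * ‖u‖ ≤ β * ‖v‖ ^ 2 / 2 + ‖u‖ ^ 2 / (2 * β) := by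
    have : 0 ≤ (β * ‖v‖ - ‖u‖) ^ 2 / (2 * β) := by positivity
    have expand : (β * ‖v‖ - ‖u‖) ^ 2 / (2 * β)
        = β * ‖v‖ ^ 2 / 2 + ‖u‖ ^ 2 / (2 * β) - ‖v‖ * ‖u‖ := by
      field_simp
      ring
    linarith
  linarith [neg_le_of_abs_le (abs_real_inner_le_norm v u)]

noncomputable def hingeProxObjective (a y₀ : E) (c β : ℝ) (y : E) : ℝ :=
  max (c + ⟪a, y - y₀⟫) 0 + 1 / (2 * β) * ‖y - y₀‖ ^ 2

lemma le_hingeProxObjective {β s : ℝ} (hβ : 0 < β) (hs₀ : 0 ≤ s) (hs₁ : s ≤ 1)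
    (a y₀ : E) (c : ℝ) (y : E) :
    s * c - β * s ^ 2 * ‖a‖ ^ 2 / 2 ≤ hingeProxObjective a y₀ c β y := by
  have young := neg_young_le_real_inner hβ (s • a) (y - y₀)
  rw [real_inner_smul_left, norm_smul, Real.norm_of_nonneg hs₀, mul_pow] at young
  calc s * c - β * s ^ 2 * ‖a‖ ^ 2 / 2
      ≤ s * (c + ⟪a, y - y₀⟫) + 1 / (2 * β) * ‖y - y₀‖ ^ 2 := by
        rw [one_div_mul_eq_div]
        linarith
    _ ≤ hingeProxObjective a y₀ c β y := by
        unfold hingeProxObjective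
        gcongr
        exact mul_le_max_zero hs₀ hs₁ _

lemma hingeProxObjective_sub_smul (a y₀ : E) (c β t : ℝ) :
    hingeProxObjective a y₀ c β (y₀ - t • a)
      = max (c - t * ‖a‖ ^ 2) 0 + t ^ 2 * ‖a‖ ^ 2 / (2 * β) := by
  simp only [hingeProxObjective, sub_sub_cancel_left, inner_neg_right, real_inner_smul_right,
    real_inner_self_eq_norm_sq, norm_neg, norm_smul, Real.norm_eq_abs, mul_pow, sq_abs]
  ring_nf

theorem hingeProxObjective_le_of_mul_eq_max {β t c : ℝ} (hβ : 0 < β) (ht₀ : 0 ≤ t) (ht₁ : t ≤ β)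
    {a : E} (hslack : t * (c - t * ‖a‖ ^ 2) = β * max (c - t * ‖a‖ ^ 2) 0) (y₀ y : E) :
    hingeProxObjective a y₀ c β (y₀ - t • a) ≤ hingeProxObjective a y₀ c β y := by
  have hs₁ : t / β ≤ 1 := (div_le_one hβ).2 ht₁
  refine le_trans (le_of_eq ?_) (le_hingeProxObjective hβ (by positivity) hs₁ a y₀ c y)
  have hmax : max (c - t * ‖a‖ ^ 2) 0 = t * (c - t * ‖a‖ ^ 2) / β := by
    rw [hslack, mul_div_cancel_left₀ _ hβ.ne']
  rw [hingeProxObjective_sub_smul, hmax]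
  field_simp
  ring

end HingeProx

lemma min_mul_sub_eq_mul_max {A β c : ℝ} (hA : 0 < A) (hβ : 0 < β) :
    min β (max c 0 / A) * (c - min β (max c 0 / A) * A)
      = β * max (c - min β (max c 0 / A) * A) 0 := by
  rcases le_total β (max c 0 / A) with h | h
  · have hβA : β * A ≤ c := by
      have := (le_div_iff₀ hA).1 h
      rcases le_total c 0 with hc | hc
      · rw [max_eq_right hc] at this; nlinarith
      · rwa [max_eq_left hc] at this
    rw [min_eq_left h, max_eq_left (by linarith)]
  · rw [min_eq_right h, div_mul_cancel₀ _ hA.ne', max_eq_right (a := c - max c 0) (by simp)]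
    rcases le_total c 0 with hc | hc <;> simp [hc]

theorem stmt_6_general (p : ℕ) (y0 a : EuclideanSpace ℝ (Fin p)) (c β : ℝ)
    (hβ : 0 < β) :
    let h : EuclideanSpace ℝ (Fin p) → ℝ := fun y =>
      max (c + ⟪a, y - y0⟫) 0 + 1 / (2 * β) * ‖y - y0‖ ^ 2
    let yplus := y0 - (min β (max c 0 / ‖a‖ ^ 2)) • a
    ∀ y, h yplus ≤ h y := by
  intro h yplus y
  rcases eq_or_ne a 0 with rfl | ha
  · simp only [h, yplus, smul_zero, sub_zero, sub_self, inner_zero_left, add_zero, norm_zero]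
    gcongr
    positivity
  · have hA : 0 < ‖a‖ ^ 2 := by positivity
    exact hingeProxObjective_le_of_mul_eq_max hβ (le_min hβ.le (by positivity)) (min_le_left _ _)
      (min_mul_sub_eq_mul_max hA hβ) y0 y

/-- The minimizer of y ↦ (c + ⟨a, y - y⁰⟩)₊ + (1/(2β))‖y - y⁰‖² is
y⁺ = y⁰ - min{β, (c)₊/‖a‖²} a. -/
theorem stmt_6 (p : ℕ) (y0 a : EuclideanSpace ℝ (Fin p)) (c β : ℝ)
    (hβ : 0 < β) (ha : a ≠ 0) :
    let h : EuclideanSpace ℝ (Fin p) → ℝ := fun y =>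
      max (c + ⟪a, y - y0⟫) 0 + 1 / (2 * β) * ‖y - y0‖ ^ 2
    let yplus := y0 - (min β (max c 0 / ‖a‖ ^ 2)) • a
    ∀ y, h yplus ≤ h y :=
  stmt_6_general p y0 a c β hβ
end

section
/- Let each f_i be convex and differentiable, and let (w^*, s^*) be a global minimizer of g(w,s) = (1/n) Σ_i [s_i + c (f_i(w) - s_i)₊] with c > 0. Then necessarily c ≥ 1, s_i^* ≤ f_i(w^*) for all i, w^* is a global minimizer of f = (1/n) Σ f_i, and g(w^*, s^*) = f(w^*). -/
/-!
Write `S(w, s) = ∑ᵢ (sᵢ + c (fᵢ(w) - sᵢ)₊)`, so that `g = S / n`. Along constant `s ≡ t` with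
`t ≤ minᵢ fᵢ(w)` one has `S = n (1 - c) t + c ∑ᵢ fᵢ(w)`, unbounded below as `t → -∞` unless `c ≥ 1`.
Lowering some `sᵢ > fᵢ(w)` to `fᵢ(w)` strictly decreases `S`. For `c ≥ 1` each summand is at least
`fᵢ(w)`, with equality at `sᵢ = fᵢ(w)`, so `min_s S(w, s) = ∑ᵢ fᵢ(w)` and minimizing `S` jointly is
minimizing `∑ᵢ fᵢ`.
-/

open Finset

section PenaltyObjective

variable {ι α : Type*} [Fintype ι]

def penaltyObjective (f : ι → α → ℝ) (c : ℝ) (w : α) (s : ι → ℝ) : ℝ :=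
  ∑ i, (s i + c * max (f i w - s i) 0)

variable {f : ι → α → ℝ} {c : ℝ} {w : α}

theorem penaltyObjective_self : penaltyObjective f c w (fun i => f i w) = ∑ i, f i w := by
  simp [penaltyObjective]

theorem sum_le_penaltyObjective (hc : 1 ≤ c) (s : ι → ℝ) :
    ∑ i, f i w ≤ penaltyObjective f c w s := by
  refine sum_le_sum fun i _ => ?_
  rcases le_total (f i w) (s i) with h | h
  · nlinarith [le_max_right (f i w - s i) 0]
  · rw [max_eq_left (sub_nonneg.2 h)]
    nlinarith

theorem penaltyObjective_update_lt [DecidableEq ι] {s : ι → ℝ} {i : ι} (h : f i w < s i) :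
    penaltyObjective f c w (Function.update s i (f i w)) < penaltyObjective f c w s := by
  refine sum_lt_sum (fun j _ => ?_) ⟨i, mem_univ i, ?_⟩
  · rcases eq_or_ne j i with rfl | hj
    · simp [h.le]
    · simp [hj]
  · simpa [max_eq_right (sub_nonpos.2 h.le)] using h

theorem penaltyObjective_const {t : ℝ} (ht : ∀ i, t ≤ f i w) :
    penaltyObjective f c w (fun _ => t) = Fintype.card ι * (1 - c) * t + c * ∑ i, f i w := by
  have hsummand (i : ι) : t + c * max (f i w - t) 0 = (1 - c) * t + c * f i w := by
    rw [max_eq_left (sub_nonneg.2 (ht i))]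
    ring
  simp only [penaltyObjective, hsummand, sum_add_distrib, sum_const, card_univ, nsmul_eq_mul,
    ← mul_sum]
  ring

theorem not_bddBelow_penaltyObjective [Nonempty ι] (hc : c < 1) :
    ¬ BddBelow (Set.range (penaltyObjective f c w)) := by
  rintro ⟨m, hm⟩
  have hcard : (0 : ℝ) < Fintype.card ι * (1 - c) := by
    have := Fintype.card_pos (α := ι)
    have : (0 : ℝ) < 1 - c := by linarith
    positivity
  set t := min (univ.inf' univ_nonempty fun i => f i w)
    ((m - c * ∑ i, f i w) / (Fintype.card ι * (1 - c)) - 1)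
  have ht : ∀ i, t ≤ f i w := fun i => (min_le_left _ _).trans (inf'_le _ (mem_univ i))
  have hlt : Fintype.card ι * (1 - c) * t < m - c * ∑ i, f i w := by
    rw [← lt_div_iff₀' hcard]
    exact (min_le_right _ _).trans_lt (sub_one_lt _)
  have := hm ⟨fun _ => t, rfl⟩
  rw [penaltyObjective_const ht] at this
  linarith

end PenaltyObjective

theorem stmt_10_general (d n : ℕ) (hn : 0 < n)
    (f : Fin n → EuclideanSpace ℝ (Fin d) → ℝ)
    (c : ℝ)
    (g : EuclideanSpace ℝ (Fin d) → (Fin n → ℝ) → ℝ)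
    (hg : ∀ w s, g w s = (1 / (n : ℝ)) * ∑ i, (s i + c * max (f i w - s i) 0))
    (wstar : EuclideanSpace ℝ (Fin d)) (sstar : Fin n → ℝ)
    (hmin : ∀ w s, g wstar sstar ≤ g w s) :
    1 ≤ c ∧ (∀ i, sstar i ≤ f i wstar) ∧
      (∀ w, (1 / (n : ℝ)) * ∑ i, f i wstar ≤ (1 / (n : ℝ)) * ∑ i, f i w) ∧
      g wstar sstar = (1 / (n : ℝ)) * ∑ i, f i wstar := by
  have : Nonempty (Fin n) := ⟨⟨0, hn⟩⟩
  have hn' : (0 : ℝ) < 1 / n := by positivity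
  have hg_eq (w s) : g w s = 1 / n * penaltyObjective f c w s := hg w s
  have hminS (w s) : penaltyObjective f c wstar sstar ≤ penaltyObjective f c w s :=
    le_of_mul_le_mul_left (hg_eq wstar sstar ▸ hg_eq w s ▸ hmin w s) hn'
  have hc : 1 ≤ c := not_lt.1 fun hc =>
    not_bddBelow_penaltyObjective (w := wstar) hc ⟨_, Set.forall_mem_range.2 (hminS wstar)⟩
  have hvalue : penaltyObjective f c wstar sstar = ∑ i, f i wstar := by
    refine le_antisymm ?_ (sum_le_penaltyObjective hc _)
    simpa only [penaltyObjective_self] using hminS wstar fun i => f i wstar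
  refine ⟨hc, fun i => not_lt.1 fun hi => ?_, fun w => ?_, by rw [hg_eq, hvalue]⟩
  · classical
    exact (penaltyObjective_update_lt hi).not_ge (hminS _ _)
  · rw [← hvalue, ← penaltyObjective_self (w := w) (c := c)]
    exact mul_le_mul_of_nonneg_left (hminS _ _) hn'.le

/-- If (w*, s*) is a global minimizer of the penalty function g with c > 0, then
c ≥ 1, sᵢ* ≤ fᵢ(w*) for all i, w* is a global minimizer of f, and g(w*,s*) = f(w*). -/
theorem stmt_10 (d n : ℕ) (hn : 0 < n)
    (f : Fin n → EuclideanSpace ℝ (Fin d) → ℝ)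
    (hconv : ∀ i, ConvexOn ℝ Set.univ (f i))
    (hdiff : ∀ i, Differentiable ℝ (f i))
    (c : ℝ) (hc : 0 < c)
    (g : EuclideanSpace ℝ (Fin d) → (Fin n → ℝ) → ℝ)
    (hg : ∀ w s, g w s = (1 / (n : ℝ)) * ∑ i, (s i + c * max (f i w - s i) 0))
    (wstar : EuclideanSpace ℝ (Fin d)) (sstar : Fin n → ℝ)
    (hmin : ∀ w s, g wstar sstar ≤ g w s) :
    1 ≤ c ∧ (∀ i, sstar i ≤ f i wstar) ∧
      (∀ w, (1 / (n : ℝ)) * ∑ i, f i wstar ≤ (1 / (n : ℝ)) * ∑ i, f i w) ∧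
      g wstar sstar = (1 / (n : ℝ)) * ∑ i, f i wstar :=
  stmt_10_general d n hn f c g hg wstar sstar hmin
end

section
/- Let f = (1/n)Σ f_i with each f_i convex and differentiable, λ, δ > 0, w^t fixed, and φ_t(w,s) := (1/n)Σ_i φ_{i,t}(w,s) with φ_{i,t} as in the surrogate definition. Then w^* is a minimizer of f if and only if (w^*, s^*_t) is a minimizer of φ_t, where s^*_{i,t} = f_i(w^*) - λ‖∇f_i(w^t)‖². -/
open RealInnerProductSpace

lemma aux_low_13 (a b dl s : ℝ) (ha : 0 < a) :
    b + dl - a / 2 ≤ 1 / 2 * (max (b - s + dl) 0) ^ 2 / a + s := by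
  rcases le_or_gt (b - s + dl) 0 with h | h
  · rw [max_eq_right h]
    have h0 : 1 / 2 * (0 : ℝ) ^ 2 / a = 0 := by ring
    rw [h0]; linarith
  · rw [max_eq_left h.le]
    have key : 1 / 2 * (b - s + dl) ^ 2 / a + s - (b + dl - a / 2)
        = (b - s + dl - a) ^ 2 / (2 * a) := by
      field_simp
      ring
    nlinarith [div_nonneg (sq_nonneg (b - s + dl - a)) (by linarith : (0:ℝ) ≤ 2 * a)]

lemma aux_eq_13 (a b dl : ℝ) (ha : 0 < a) :
    1 / 2 * (max (b - (b - (a - dl)) + dl) 0) ^ 2 / a + (b - (a - dl))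
      = b + dl - a / 2 := by
  have h1 : b - (b - (a - dl)) + dl = a := by ring
  rw [h1, max_eq_left ha.le]
  field_simp
  ring

/-- w* minimizes f iff (w*, s*_t) minimizes φ_t, where
s*_{i,t} = fᵢ(w*) - λ‖∇fᵢ(wᵗ)‖². -/
theorem stmt_13 (d n : ℕ) (hn : 0 < n)
    (f : Fin n → EuclideanSpace ℝ (Fin d) → ℝ)
    (hconv : ∀ i, ConvexOn ℝ Set.univ (f i))
    (hdiff : ∀ i, Differentiable ℝ (f i))
    (wt : EuclideanSpace ℝ (Fin d)) (lam δ : ℝ) (hlam : 0 < lam) (hδ : 0 < δ)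
    (wstar : EuclideanSpace ℝ (Fin d)) :
    let φt : EuclideanSpace ℝ (Fin d) → (Fin n → ℝ) → ℝ := fun w s =>
      (1 / (n : ℝ)) * ∑ i, ((1 / 2) * (max (f i w - s i + δ) 0) ^ 2 /
          (δ + lam * ‖gradient (f i) wt‖ ^ 2) + s i)
    let F : EuclideanSpace ℝ (Fin d) → ℝ := fun w => (1 / (n : ℝ)) * ∑ i, f i w
    let sstar : Fin n → ℝ := fun i => f i wstar - lam * ‖gradient (f i) wt‖ ^ 2
    (∀ w, F wstar ≤ F w) ↔ (∀ w s, φt wstar sstar ≤ φt w s) := by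
  intro φt F sstar
  have hninv : (0:ℝ) ≤ 1 / (n : ℝ) := by positivity
  have ha : ∀ i : Fin n, 0 < δ + lam * ‖gradient (f i) wt‖ ^ 2 := fun i => by positivity
  set C : ℝ := (1 / (n : ℝ)) *
    ∑ i, (δ - (δ + lam * ‖gradient (f i) wt‖ ^ 2) / 2) with hC
  -- lower bound: φt w s ≥ F w + C
  have hlb : ∀ w s, F w + C ≤ φt w s := by
    intro w s
    have hterm : ∀ i ∈ Finset.univ,
        f i w + (δ - (δ + lam * ‖gradient (f i) wt‖ ^ 2) / 2) ≤
        (1 / 2) * (max (f i w - s i + δ) 0) ^ 2 /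
          (δ + lam * ‖gradient (f i) wt‖ ^ 2) + s i := by
      intro i _
      have := aux_low_13 (δ + lam * ‖gradient (f i) wt‖ ^ 2) (f i w) δ (s i) (ha i)
      linarith
    have hsum := Finset.sum_le_sum hterm
    have h1 : F w + C = (1 / (n : ℝ)) *
        ∑ i, (f i w + (δ - (δ + lam * ‖gradient (f i) wt‖ ^ 2) / 2)) := by
      rw [Finset.sum_add_distrib, mul_add]
    rw [h1]
    exact mul_le_mul_of_nonneg_left hsum hninv
  -- value at the optimal s
  have hub : ∀ w, φt w (fun i => f i w - lam * ‖gradient (f i) wt‖ ^ 2) = F w + C := by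
    intro w
    have hterm : ∀ i ∈ Finset.univ,
        (1 / 2) * (max (f i w - (f i w - lam * ‖gradient (f i) wt‖ ^ 2) + δ) 0) ^ 2 /
          (δ + lam * ‖gradient (f i) wt‖ ^ 2) +
          (f i w - lam * ‖gradient (f i) wt‖ ^ 2) =
        f i w + (δ - (δ + lam * ‖gradient (f i) wt‖ ^ 2) / 2) := by
      intro i _
      have := aux_eq_13 (δ + lam * ‖gradient (f i) wt‖ ^ 2) (f i w) δ (ha i)
      have h2 : f i w - (δ + lam * ‖gradient (f i) wt‖ ^ 2 - δ)
          = f i w - lam * ‖gradient (f i) wt‖ ^ 2 := by ring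
      rw [h2] at this
      linarith
    show (1 / (n : ℝ)) * ∑ i,
        ((1 / 2) * (max (f i w - (f i w - lam * ‖gradient (f i) wt‖ ^ 2) + δ) 0) ^ 2 /
          (δ + lam * ‖gradient (f i) wt‖ ^ 2) +
          (f i w - lam * ‖gradient (f i) wt‖ ^ 2)) = F w + C
    rw [Finset.sum_congr rfl hterm, Finset.sum_add_distrib, mul_add]
  constructor
  · intro hF w s
    have h3 : φt wstar sstar = F wstar + C := hub wstar
    calc φt wstar sstar = F wstar + C := h3
      _ ≤ F w + C := by linarith [hF w]
      _ ≤ φt w s := hlb w s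
  · intro hφ w
    have h1 : φt wstar sstar ≤ φt w (fun i => f i w - lam * ‖gradient (f i) wt‖ ^ 2) :=
      hφ w _
    have h2 := hub w
    have h3 : φt wstar sstar = F wstar + C := hub wstar
    linarith
end

section
/- Let τ := (f_i(w^t) - s_i^t + δ)₊/(δ + λ‖∇f_i(w^t)‖²) and ŝ_i^{t+1} := s_i^t + δ(τ - 1). With D the block-diagonal metric with blocks (1/λ)I_d and (1/δ)I_n, the gradient of the surrogate φ_{i,t} at (w^t, s^t) satisfies (1/2)‖∇φ_{i,t}(w^t, s^t)‖²_{D^{-1}} = φ_{i,t}(w^t, s^t) - ŝ_i^{t+1} - δ/2. -/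
open RealInnerProductSpace

lemma posPartSq_deriv (a : ℝ) : HasDerivAt (fun x : ℝ => max x 0 ^ 2) (2 * max a 0) a := by
  rcases lt_trichotomy a 0 with h | h | h
  · have h0 : HasDerivAt (fun _ : ℝ => (0:ℝ)) 0 a := hasDerivAt_const _ _
    have heq : (fun x : ℝ => max x 0 ^ 2) =ᶠ[nhds a] fun _ => (0:ℝ) := by
      filter_upwards [Iio_mem_nhds h] with x hx
      simp [max_eq_right (Set.mem_Iio.mp hx).le]
    have := h0.congr_of_eventuallyEq heq
    simpa [max_eq_right h.le] using this
  · subst h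
    rw [hasDerivAt_iff_tendsto_slope]
    simp only [max_self, mul_zero]
    apply squeeze_zero_norm' (a := fun x : ℝ => |x|)
    · filter_upwards [self_mem_nhdsWithin] with x hx
      have hx' : x ≠ 0 := hx
      rw [slope_def_field]
      simp only [max_self, ne_eq, OfNat.ofNat_ne_zero, not_false_eq_true, zero_pow, sub_zero]
      rw [Real.norm_eq_abs, abs_div, abs_of_nonneg (sq_nonneg _),
        div_le_iff₀ (abs_pos.mpr hx')]
      have h1 : max x 0 ^ 2 ≤ x ^ 2 := by
        rcases le_total x 0 with hx0 | hx0
        · simp [max_eq_right hx0, sq_nonneg]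
        · simp [max_eq_left hx0]
      calc max x 0 ^ 2 ≤ x ^ 2 := h1
        _ = |x| * |x| := by rw [← abs_mul, abs_of_nonneg (mul_self_nonneg x), sq]
    · have : Filter.Tendsto (fun x : ℝ => |x|) (nhdsWithin 0 {(0:ℝ)}ᶜ) (nhds |0|) :=
        (continuous_abs.tendsto (0:ℝ)).mono_left nhdsWithin_le_nhds
      simpa using this
  · have heq : (fun x : ℝ => max x 0 ^ 2) =ᶠ[nhds a] fun x : ℝ => x ^ 2 := by
      filter_upwards [Ioi_mem_nhds h] with x hx
      simp [max_eq_left (Set.mem_Ioi.mp hx).le]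
    have := (hasDerivAt_pow 2 a).congr_of_eventuallyEq heq
    simpa [max_eq_left h.le, mul_comm] using this

lemma hasGradientAt_comp' {E : Type*} [NormedAddCommGroup E] [InnerProductSpace ℝ E]
    [CompleteSpace E] {f : E → ℝ} {g : E} {x : E}
    (hf : HasGradientAt f g x) {h : ℝ → ℝ} {c : ℝ} (hh : HasDerivAt h c (f x)) :
    HasGradientAt (fun y => h (f y)) (c • g) x := by
  rw [hasGradientAt_iff_hasFDerivAt] at hf ⊢
  have := hh.hasFDerivAt.comp x hf
  have heq : (InnerProductSpace.toDual ℝ E) (c • g) =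
      ContinuousLinearMap.toSpanSingleton ℝ c ∘SL (InnerProductSpace.toDual ℝ E) g := by
    ext v
    simp [real_inner_smul_left, mul_comm]
  rw [heq]
  exact this

/-- Gradient bound for the surrogate: (1/2)‖∇φ_{i,t}(wᵗ,sᵗ)‖²_{D⁻¹}
= φ_{i,t}(wᵗ,sᵗ) - ŝᵢ^{t+1} - δ/2, where ‖(gw,gs)‖²_{D⁻¹} = λ‖gw‖² + δΣⱼ(gsⱼ)². -/
theorem stmt_14 (d n : ℕ) (f : Fin n → EuclideanSpace ℝ (Fin d) → ℝ)
    (hdiff : ∀ i, Differentiable ℝ (f i))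
    (lam δ : ℝ) (hlam : 0 < lam) (hδ : 0 < δ)
    (wt : EuclideanSpace ℝ (Fin d)) (st : Fin n → ℝ) (i : Fin n)
    (φ : EuclideanSpace ℝ (Fin d) → (Fin n → ℝ) → ℝ)
    (hφ : ∀ w s, φ w s = (1 / 2) * (max (f i w - s i + δ) 0) ^ 2 /
        (δ + lam * ‖gradient (f i) wt‖ ^ 2) + s i)
    (τ : ℝ)
    (hτ : τ = max (f i wt - st i + δ) 0 / (δ + lam * ‖gradient (f i) wt‖ ^ 2))
    (shat : ℝ) (hshat : shat = st i + δ * (τ - 1))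
    (gw : EuclideanSpace ℝ (Fin d)) (hgw : HasGradientAt (fun w => φ w st) gw wt)
    (gs : Fin n → ℝ)
    (hgs : ∀ j, HasDerivAt (fun x => φ wt (Function.update st j x)) (gs j) (st j)) :
    (1 / 2) * (lam * ‖gw‖ ^ 2 + δ * ∑ j, (gs j) ^ 2) = φ wt st - shat - δ / 2 := by
  set G := gradient (f i) wt with hG
  set A : ℝ := δ + lam * ‖G‖ ^ 2 with hA
  have hApos : 0 < A := by positivity
  set m : ℝ := max (f i wt - st i + δ) 0 with hm
  -- gs j = 0 for j ≠ i
  have hzero : ∀ j, j ≠ i → gs j = 0 := by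
    intro j hj
    have hconst : (fun x => φ wt (Function.update st j x)) = fun _ => φ wt st := by
      funext x
      rw [hφ, hφ, Function.update_of_ne (Ne.symm hj)]
    have h0 : HasDerivAt (fun x => φ wt (Function.update st j x)) 0 (st j) := by
      rw [hconst]; exact hasDerivAt_const _ _
    exact (hgs j).unique h0
  -- gs i = 1 - τ
  have hgsi : gs i = 1 - τ := by
    have hinner : HasDerivAt (fun x : ℝ => f i wt - x + δ) (-1) (st i) := by
      simpa using ((hasDerivAt_id (st i)).const_sub (f i wt)).add_const δ
    have hcomp := (posPartSq_deriv (f i wt - st i + δ)).comp (st i) hinner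
    have hder : HasDerivAt (fun x => φ wt (Function.update st i x))
        ((1 / 2) * (2 * m * -1) / A + 1) (st i) := by
      have : (fun x => φ wt (Function.update st i x)) =
          fun x => (1 / 2) * (max (f i wt - x + δ) 0) ^ 2 / A + x := by
        funext x
        rw [hφ, Function.update_self]
      rw [this]
      exact (((hcomp.const_mul (1 / 2)).div_const A).add (hasDerivAt_id (st i)))
    have := (hgs i).unique hder
    rw [this, hτ]
    field_simp
    ring
  -- gw = τ • G
  have hgw0 : HasGradientAt (fun w => φ w st) (τ • G) wt := by
    have hinner : HasDerivAt (fun y : ℝ => (1 / 2) * (max (y - st i + δ) 0) ^ 2 / A + st i)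
        ((1 / 2) * (2 * m * 1) / A) (f i wt) := by
      have h1 : HasDerivAt (fun y : ℝ => y - st i + δ) 1 (f i wt) := by
        simpa using ((hasDerivAt_id (f i wt)).sub_const (st i)).add_const δ
      have h2 := (posPartSq_deriv (f i wt - st i + δ)).comp (f i wt) h1
      exact (((h2.const_mul (1 / 2)).div_const A).add_const (st i))
    have hgradf : HasGradientAt (f i) G wt := ((hdiff i) wt).hasGradientAt
    have := hasGradientAt_comp' hgradf hinner
    have heq : (fun w => φ w st) =
        fun w => (1 / 2) * (max (f i w - st i + δ) 0) ^ 2 / A + st i := by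
      funext w; rw [hφ]
    have hc : (1 / 2) * (2 * m * 1) / A = τ := by rw [hτ]; ring
    rw [heq, ← hc]
    exact this
  have hgweq : gw = τ • G := hgw.unique hgw0
  have hnorm : ‖gw‖ ^ 2 = τ ^ 2 * ‖G‖ ^ 2 := by
    rw [hgweq, norm_smul, mul_pow, Real.norm_eq_abs, sq_abs]
  have hsum : ∑ j, (gs j) ^ 2 = (gs i) ^ 2 := by
    apply Finset.sum_eq_single
    · intro j _ hj; rw [hzero j hj]; ring
    · intro h; exact absurd (Finset.mem_univ i) h
  have hmτ : m = τ * A := by rw [hτ]; field_simp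
  have key : ∀ B : ℝ, B ≠ 0 → B = δ + lam * ‖G‖ ^ 2 →
      (1:ℝ) / 2 * (lam * (τ ^ 2 * ‖G‖ ^ 2) + δ * (1 - τ) ^ 2) =
        1 / 2 * (τ * B) ^ 2 / B + st i - (st i + δ * (τ - 1)) - δ / 2 := by
    intro B hB hBe
    subst hBe
    field_simp
    ring
  rw [hnorm, hsum, hgsi, hφ, hshat, ← hm, hmτ]
  exact key A hApos.ne' hA
end

section
/- Suppose f_i is L_i-smooth and bounded below for each i, λ ∈ (0, 1/(2L_max)] and s_i^0 ≥ inf f_i for all i. Then along the iterates of the relaxed method with relaxation γ ∈ (0,1], where τ_t = (f_{j_t}(w^t) - s_{j_t}^t + δ)₊/(δ + λ‖∇f_{j_t}(w^t)‖²), s_{j_t}^{t+1} = s_{j_t}^t + γδ(τ_t - 1), and s_i^{t+1} = s_i^t for i ≠ j_t, one has s_i^t ≥ inf f_i for all i and all t. -/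
open RealInnerProductSpace

lemma descent_aux {F : Type*} [NormedAddCommGroup F] [InnerProductSpace ℝ F] [CompleteSpace F]
    (f : F → ℝ) (hf : Differentiable ℝ f) (K : ℝ) (hK : 0 < K)
    (hL : ∀ x y, ‖gradient f x - gradient f y‖ ≤ K * ‖x - y‖) (x : F) :
    f (x - (1/K) • gradient f x) ≤ f x - ‖gradient f x‖^2 / (2*K) := by
  set g := gradient f x with hg
  set v : F := -((1/K) • g) with hv
  have hder : ∀ t : ℝ, HasDerivAt (fun t : ℝ => f (x + t • v)) ⟪gradient f (x + t • v), v⟫ t := by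
    intro t
    have h1 : HasDerivAt (fun t : ℝ => x + t • v) v t := by
      simpa using ((hasDerivAt_id t).smul_const v).const_add x
    have h2 := (hf (x + t • v)).hasGradientAt.hasFDerivAt
    simpa [Function.comp_def] using h2.comp_hasDerivAt t h1
  have hcontg : Continuous (gradient f) := by
    have : LipschitzWith (Real.toNNReal K) (gradient f) := by
      apply LipschitzWith.of_dist_le_mul
      intro a b
      simpa [dist_eq_norm, Real.coe_toNNReal _ hK.le] using hL a b
    exact this.continuous
  have hcont : Continuous (fun t : ℝ => ⟪gradient f (x + t • v), v⟫) := by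
    apply Continuous.inner
    · exact hcontg.comp (by continuity)
    · exact continuous_const
  have hFTC : f (x + (1:ℝ) • v) - f (x + (0:ℝ) • v) =
      ∫ t in (0:ℝ)..1, ⟪gradient f (x + t • v), v⟫ := by
    rw [intervalIntegral.integral_eq_sub_of_hasDerivAt (fun t _ => hder t)
      (hcont.intervalIntegrable 0 1)]
  have hbound : ∀ t ∈ Set.Icc (0:ℝ) 1,
      ⟪gradient f (x + t • v), v⟫ ≤ ⟪g, v⟫ + K * ‖v‖^2 * t := by
    intro t ht
    have h1 : ⟪gradient f (x + t • v), v⟫ = ⟪g, v⟫ + ⟪gradient f (x + t • v) - g, v⟫ := by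
      rw [inner_sub_left]; ring
    have h2 : ⟪gradient f (x + t • v) - g, v⟫ ≤ ‖gradient f (x + t • v) - g‖ * ‖v‖ :=
      real_inner_le_norm _ _
    have h3 : ‖gradient f (x + t • v) - g‖ ≤ K * (t * ‖v‖) := by
      have := hL (x + t • v) x
      simpa [norm_smul, abs_of_nonneg ht.1] using this
    nlinarith [norm_nonneg v, mul_le_mul_of_nonneg_right h3 (norm_nonneg v)]
  have hint : (∫ t in (0:ℝ)..1, ⟪gradient f (x + t • v), v⟫) ≤ ⟪g, v⟫ + K * ‖v‖^2 / 2 := by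
    have h1 : (∫ t in (0:ℝ)..1, ⟪gradient f (x + t • v), v⟫) ≤
        ∫ t in (0:ℝ)..1, (⟪g, v⟫ + K * ‖v‖^2 * t) := by
      apply intervalIntegral.integral_mono_on (by norm_num) (hcont.intervalIntegrable 0 1)
        (((continuous_const.add (continuous_const.mul continuous_id)) : Continuous fun t : ℝ => ⟪g, v⟫ + K * ‖v‖^2 * t).intervalIntegrable 0 1)
      exact hbound
    have h2 : (∫ t in (0:ℝ)..1, (⟪g, v⟫ + K * ‖v‖^2 * t)) = ⟪g, v⟫ + K * ‖v‖^2 / 2 := by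
      have hi : IntervalIntegrable (fun t : ℝ => K * ‖v‖^2 * t) MeasureTheory.volume 0 1 :=
        ((continuous_const.mul continuous_id) :
          Continuous fun t : ℝ => K * ‖v‖^2 * t).intervalIntegrable 0 1
      rw [intervalIntegral.integral_add intervalIntegrable_const hi,
        intervalIntegral.integral_const, intervalIntegral.integral_const_mul,
        integral_id]
      norm_num
      ring
    linarith
  have hgv : ⟪g, v⟫ = -(1/K) * ‖g‖^2 := by
    rw [hv, inner_neg_right, real_inner_smul_right, real_inner_self_eq_norm_sq]; ring
  have hnv : ‖v‖^2 = (1/K)^2 * ‖g‖^2 := by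
    rw [hv, norm_neg, norm_smul, mul_pow, Real.norm_eq_abs, sq_abs]
  have hxy : x + (1:ℝ) • v = x - (1/K) • g := by simp [hv]; abel
  have hx0 : x + (0:ℝ) • v = x := by simp
  rw [hxy, hx0] at hFTC
  have hmain : f (x - (1/K) • g) - f x ≤ -(1/K) * ‖g‖^2 + K * ((1/K)^2 * ‖g‖^2) / 2 := by
    rw [hFTC, ← hgv, ← hnv] at *; linarith [hint]
  have hK' : K ≠ 0 := hK.ne'
  have heq : -(1/K) * ‖g‖^2 + K * ((1/K)^2 * ‖g‖^2) / 2 = - (‖g‖^2 / (2*K)) := by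
    field_simp; ring
  linarith [hmain, heq ▸ hmain]

/-- Lower bound on the slack variables: if sᵢ⁰ ≥ inf fᵢ then sᵢᵗ ≥ inf fᵢ for all t. -/
theorem stmt_15 (d n : ℕ) (f : Fin n → EuclideanSpace ℝ (Fin d) → ℝ)
    (hdiff : ∀ i, Differentiable ℝ (f i))
    (hbdd : ∀ i, BddBelow (Set.range (f i)))
    (L : Fin n → ℝ)
    (hsmooth : ∀ i x y, ‖gradient (f i) x - gradient (f i) y‖ ≤ L i * ‖x - y‖)
    (Lmax : ℝ) (hLmaxpos : 0 < Lmax) (hLmax : ∀ i, L i ≤ Lmax)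
    (lam δ γ : ℝ) (hlam : 0 < lam) (hlam2 : lam ≤ 1 / (2 * Lmax))
    (hδ : 0 < δ) (hγ : 0 < γ) (hγ1 : γ ≤ 1)
    (j : ℕ → Fin n)
    (w : ℕ → EuclideanSpace ℝ (Fin d)) (s : ℕ → Fin n → ℝ) (τ : ℕ → ℝ)
    (hτ : ∀ t, τ t = max (f (j t) (w t) - s t (j t) + δ) 0 /
        (δ + lam * ‖gradient (f (j t)) (w t)‖ ^ 2))
    (hw : ∀ t, w (t + 1) = w t - (γ * lam * τ t) • gradient (f (j t)) (w t))
    (hs : ∀ t i, s (t + 1) i = if i = j t then s t i + γ * δ * (τ t - 1) else s t i)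
    (hs0 : ∀ i, (⨅ x, f i x) ≤ s 0 i) :
    ∀ t i, (⨅ x, f i x) ≤ s t i := by
  -- each f i is Lmax-smooth
  have hL' : ∀ i x y, ‖gradient (f i) x - gradient (f i) y‖ ≤ Lmax * ‖x - y‖ := by
    intro i x y
    exact (hsmooth i x y).trans (mul_le_mul_of_nonneg_right (hLmax i) (norm_nonneg _))
  have key : ∀ (i : Fin n) x, (⨅ z, f i z) ≤ f i x - lam * ‖gradient (f i) x‖ ^ 2 := by
    intro i x
    have h1 := descent_aux (f i) (hdiff i) Lmax hLmaxpos (hL' i) x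
    have h2 : (⨅ z, f i z) ≤ f i (x - (1 / Lmax) • gradient (f i) x) := ciInf_le (hbdd i) _
    have h3 : lam * ‖gradient (f i) x‖ ^ 2 ≤ ‖gradient (f i) x‖ ^ 2 / (2 * Lmax) := by
      have := mul_le_mul_of_nonneg_right hlam2 (sq_nonneg ‖gradient (f i) x‖)
      calc lam * ‖gradient (f i) x‖ ^ 2 ≤ 1 / (2 * Lmax) * ‖gradient (f i) x‖ ^ 2 := this
        _ = ‖gradient (f i) x‖ ^ 2 / (2 * Lmax) := by ring
    linarith
  intro t
  induction t with
  | zero => exact hs0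
  | succ t ih =>
    intro i
    rw [hs t i]
    by_cases h : i = j t
    · subst h
      set A := f (j t) (w t) with hA
      set G := ‖gradient (f (j t)) (w t)‖ ^ 2 with hG
      have hGnn : (0:ℝ) ≤ G := by rw [hG]; positivity
      have hD : (0:ℝ) < δ + lam * G := by positivity
      have hγδ : γ * δ ≤ δ + lam * G := by nlinarith
      have hkey : (⨅ z, f (j t) z) ≤ A - lam * G := by rw [hA, hG]; exact key (j t) (w t)
      have hinf : (⨅ z, f (j t) z) ≤ A := ciInf_le (hbdd _) _
      have hih := ih (j t)
      rw [if_pos rfl]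
      rcases le_or_gt (A - s t (j t) + δ) 0 with h0 | h0
      · have hτ0 : τ t = 0 := by
          rw [hτ t, ← hA, ← hG, max_eq_right h0, zero_div]
        rw [hτ0]
        nlinarith
      · have hτv : τ t = (A - s t (j t) + δ) / (δ + lam * G) := by
          rw [hτ t, ← hA, ← hG, max_eq_left h0.le]
        rw [hτv]
        have hexp : s t (j t) + γ * δ * ((A - s t (j t) + δ) / (δ + lam * G) - 1)
            - (⨅ z, f (j t) z) =
            (((δ + lam * G) - γ * δ) * (s t (j t) - (⨅ z, f (j t) z))
              + γ * δ * ((A - lam * G) - (⨅ z, f (j t) z))) / (δ + lam * G) := by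
          field_simp
          ring
        have hnn : (0:ℝ) ≤ (((δ + lam * G) - γ * δ) * (s t (j t) - (⨅ z, f (j t) z))
              + γ * δ * ((A - lam * G) - (⨅ z, f (j t) z))) / (δ + lam * G) := by
          apply div_nonneg _ hD.le
          have h1 : (0:ℝ) ≤ ((δ + lam * G) - γ * δ) * (s t (j t) - (⨅ z, f (j t) z)) :=
            mul_nonneg (by linarith) (by linarith)
          have h2 : (0:ℝ) ≤ γ * δ * ((A - lam * G) - (⨅ z, f (j t) z)) :=
            mul_nonneg (by positivity) (by linarith)
          linarith
        linarith [hexp ▸ hnn]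
    · simpa [if_neg h] using ih i
end

section
/- Let each f_i be convex, G_i-Lipschitz, G² = Σ_i G_i², and λG² ≤ δ. Let w^* ∈ argmin f, s_i^* = f_i(w^*), z^t = (w^t, s^t), z^* = (w^*, s^*). Then f(w^t) - inf f ≤ φ_t(z^t) - φ_t(z^*) + λG²/(2n), where φ_t is the surrogate function. -/
open RealInnerProductSpace

lemma grad_norm_le_aux {d : ℕ} (f : EuclideanSpace ℝ (Fin d) → ℝ) (G : ℝ)
    (hLip : ∀ x y, |f x - f y| ≤ G * ‖x - y‖) (wt : EuclideanSpace ℝ (Fin d)) :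
    ‖gradient f wt‖ ≤ max G 0 := by
  have h1 : ‖gradient f wt‖ = ‖fderiv ℝ f wt‖ := by
    rw [gradient]
    exact LinearIsometryEquiv.norm_map _ _
  rw [h1]
  refine norm_fderiv_le_of_lip' ℝ (le_max_right _ _) ?_
  filter_upwards with x
  calc ‖f x - f wt‖ = |f x - f wt| := rfl
    _ ≤ G * ‖x - wt‖ := hLip x wt
    _ ≤ max G 0 * ‖x - wt‖ :=
        mul_le_mul_of_nonneg_right (le_max_left _ _) (norm_nonneg _)

/-- From the surrogate to f (Lipschitz case):
f(wᵗ) - inf f ≤ φ_t(zᵗ) - φ_t(z*) + λG²/(2n). -/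
theorem stmt_16 (d n : ℕ) (hn : 0 < n)
    (f : Fin n → EuclideanSpace ℝ (Fin d) → ℝ)
    (hconv : ∀ i, ConvexOn ℝ Set.univ (f i))
    (hdiff : ∀ i, Differentiable ℝ (f i))
    (G : Fin n → ℝ) (hLip : ∀ i x y, |f i x - f i y| ≤ G i * ‖x - y‖)
    (lam δ : ℝ) (hlam : 0 < lam) (hδ : 0 < δ)
    (hGδ : lam * (∑ i, (G i) ^ 2) ≤ δ)
    (wstar : EuclideanSpace ℝ (Fin d))
    (hmin : ∀ w, (1 / (n : ℝ)) * ∑ i, f i wstar ≤ (1 / (n : ℝ)) * ∑ i, f i w)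
    (wt : EuclideanSpace ℝ (Fin d)) (st : Fin n → ℝ) :
    let φt : EuclideanSpace ℝ (Fin d) → (Fin n → ℝ) → ℝ := fun w s =>
      (1 / (n : ℝ)) * ∑ i, ((1 / 2) * (max (f i w - s i + δ) 0) ^ 2 /
          (δ + lam * ‖gradient (f i) wt‖ ^ 2) + s i)
    (1 / (n : ℝ)) * ∑ i, f i wt - (1 / (n : ℝ)) * ∑ i, f i wstar ≤
      φt wt st - φt wstar (fun i => f i wstar) +
        lam * (∑ i, (G i) ^ 2) / (2 * n) := by
  intro φt
  simp only [φt]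
  have hgnonneg : ∀ i, (0:ℝ) ≤ ‖gradient (f i) wt‖ ^ 2 := fun i => sq_nonneg _
  have hgG : ∀ i, ‖gradient (f i) wt‖ ^ 2 ≤ (G i) ^ 2 := by
    intro i
    have h := grad_norm_le_aux (f i) (G i) (hLip i) wt
    have h2 : (max (G i) 0) ^ 2 ≤ (G i) ^ 2 := by
      rcases le_or_gt 0 (G i) with h' | h'
      · rw [max_eq_left h']
      · rw [max_eq_right h'.le]; simpa using sq_nonneg (G i)
    calc ‖gradient (f i) wt‖ ^ 2 ≤ (max (G i) 0) ^ 2 :=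
          pow_le_pow_left₀ (norm_nonneg _) h 2
      _ ≤ (G i) ^ 2 := h2
  have hDpos : ∀ i, (0:ℝ) < δ + lam * ‖gradient (f i) wt‖ ^ 2 := by
    intro i; nlinarith [hgnonneg i]
  -- per-term lower bound for φt wt st
  have key1 : ∀ i ∈ Finset.univ,
      f i wt + δ / 2 - lam / 2 * ‖gradient (f i) wt‖ ^ 2 ≤
      (1 / 2) * (max (f i wt - st i + δ) 0) ^ 2 /
        (δ + lam * ‖gradient (f i) wt‖ ^ 2) + st i := by
    intro i _
    set D := δ + lam * ‖gradient (f i) wt‖ ^ 2 with hDdef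
    have hDpos' : 0 < D := hDpos i
    have hmu : f i wt - st i + δ ≤ max (f i wt - st i + δ) 0 := le_max_left _ _
    have hm0 : (0:ℝ) ≤ max (f i wt - st i + δ) 0 := le_max_right _ _
    have h' : f i wt + δ / 2 - lam / 2 * ‖gradient (f i) wt‖ ^ 2 - st i ≤
        (1 / 2) * (max (f i wt - st i + δ) 0) ^ 2 / D := by
      rw [le_div_iff₀ hDpos']
      nlinarith [sq_nonneg (max (f i wt - st i + δ) 0 - D), hmu, hm0, hDpos']
    linarith
  have key1sum := Finset.sum_le_sum key1
  -- per-term upper bound for φt z*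
  have key2 : ∀ i ∈ Finset.univ,
      (1 / 2) * (max (f i wstar - f i wstar + δ) 0) ^ 2 /
        (δ + lam * ‖gradient (f i) wt‖ ^ 2) + f i wstar ≤ δ / 2 + f i wstar := by
    intro i _
    have hmax : max (f i wstar - f i wstar + δ) 0 = δ := by
      rw [sub_self, zero_add, max_eq_left hδ.le]
    rw [hmax]
    have : (1 / 2) * δ ^ 2 / (δ + lam * ‖gradient (f i) wt‖ ^ 2) ≤ δ / 2 := by
      rw [div_le_iff₀ (hDpos i)]
      nlinarith [mul_nonneg (mul_nonneg hδ.le hlam.le) (hgnonneg i)]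
    linarith
  have key2sum := Finset.sum_le_sum key2
  have keyg : lam / 2 * ∑ i, ‖gradient (f i) wt‖ ^ 2 ≤ lam / 2 * ∑ i, (G i) ^ 2 := by
    apply mul_le_mul_of_nonneg_left (Finset.sum_le_sum fun i _ => hgG i) (by positivity)
  have hNpos : (0:ℝ) < (n:ℝ) := Nat.cast_pos.mpr hn
  -- expand the two auxiliary sums
  have e1 : ∑ i, (f i wt + δ / 2 - lam / 2 * ‖gradient (f i) wt‖ ^ 2) =
      (∑ i, f i wt) + (n:ℝ) * (δ / 2) - lam / 2 * ∑ i, ‖gradient (f i) wt‖ ^ 2 := by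
    rw [Finset.sum_sub_distrib, Finset.sum_add_distrib, Finset.sum_const,
      Finset.card_univ, Fintype.card_fin, nsmul_eq_mul, Finset.mul_sum]
  have e2 : ∑ i : Fin n, (δ / 2 + f i wstar) =
      (n:ℝ) * (δ / 2) + (∑ i, f i wstar) := by
    rw [Finset.sum_add_distrib, Finset.sum_const, Finset.card_univ,
      Fintype.card_fin, nsmul_eq_mul]
  rw [e1] at key1sum
  rw [e2] at key2sum
  set S1 := ∑ i, ((1 / 2) * (max (f i wt - st i + δ) 0) ^ 2 /
      (δ + lam * ‖gradient (f i) wt‖ ^ 2) + st i) with hS1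
  set S2 := ∑ i, ((1 / 2) * (max (f i wstar - f i wstar + δ) 0) ^ 2 /
      (δ + lam * ‖gradient (f i) wt‖ ^ 2) + f i wstar) with hS2
  have main : (∑ i, f i wt) - (∑ i, f i wstar) ≤
      S1 - S2 + lam * (∑ i, (G i) ^ 2) / 2 := by linarith
  calc (1 / (n:ℝ)) * ∑ i, f i wt - (1 / (n:ℝ)) * ∑ i, f i wstar
      = (1 / (n:ℝ)) * ((∑ i, f i wt) - (∑ i, f i wstar)) := by ring
    _ ≤ (1 / (n:ℝ)) * (S1 - S2 + lam * (∑ i, (G i) ^ 2) / 2) :=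
        mul_le_mul_of_nonneg_left main (by positivity)
    _ = (1 / (n:ℝ)) * S1 - (1 / (n:ℝ)) * S2 + lam * (∑ i, (G i) ^ 2) / (2 * (n:ℝ)) := by
        field_simp
end

section
/- Let each f_i be convex and L_max-smooth, bounded below, and define σ := inf f - (1/n)Σ_i inf f_i and ν := inf f - (1/n)Σ_i inf f_i. If λL_max < 1, then (1 - λL_max)(f(w^t) - f(w^*)) ≤ φ_t(z^t) - φ_t(z^*) + λL_max·ν, where z^* = (w^*, s^*) with s_i^* = f_i(w^*) and φ_t is the surrogate function. -/
open RealInnerProductSpace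

variable {E : Type*} [NormedAddCommGroup E] [InnerProductSpace ℝ E] [CompleteSpace E]

/-- Descent lemma for functions with Lipschitz gradient. -/
lemma descent_lemma (f : E → ℝ) (hdiff : Differentiable ℝ f) (L : ℝ) (hL : 0 ≤ L)
    (hlip : ∀ x y, ‖gradient f x - gradient f y‖ ≤ L * ‖x - y‖) (x y : E) :
    f y ≤ f x + ⟪gradient f x, y - x⟫ + L / 2 * ‖y - x‖ ^ 2 := by
  set v := y - x with hv
  have hderiv : ∀ t : ℝ, HasDerivAt (fun t : ℝ => f (x + t • v))
      ⟪gradient f (x + t • v), v⟫ t := by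
    intro t
    have h1 : HasDerivAt (fun t : ℝ => x + t • v) v t := by
      simpa using ((hasDerivAt_id t).smul_const v).const_add x
    have h2 := ((hdiff (x + t • v)).hasGradientAt).hasFDerivAt
    have := h2.comp_hasDerivAt t h1
    exact this
  have hcont : Continuous (fun t : ℝ => ⟪gradient f (x + t • v), v⟫) := by
    have : Continuous (gradient f) :=
      (LipschitzWith.of_dist_le_mul (K := ⟨L, hL⟩) (by
        intro a b; rw [dist_eq_norm, dist_eq_norm]; exact hlip a b)).continuous
    exact (Continuous.inner (this.comp (by continuity)) continuous_const)
  have hftc : f (x + (1:ℝ) • v) - f (x + (0:ℝ) • v) =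
      ∫ t in (0:ℝ)..1, ⟪gradient f (x + t • v), v⟫ := by
    rw [intervalIntegral.integral_eq_sub_of_hasDerivAt (fun t _ => hderiv t)
      (hcont.intervalIntegrable 0 1)]
  have hbound : ∀ t ∈ Set.Icc (0:ℝ) 1,
      ⟪gradient f (x + t • v), v⟫ ≤ ⟪gradient f x, v⟫ + L * ‖v‖ ^ 2 * t := by
    intro t ht
    have h1 : ⟪gradient f (x + t • v) - gradient f x, v⟫ ≤ L * (t * ‖v‖) * ‖v‖ := by
      calc ⟪gradient f (x + t • v) - gradient f x, v⟫
          ≤ ‖gradient f (x + t • v) - gradient f x‖ * ‖v‖ :=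
            real_inner_le_norm _ _
        _ ≤ L * ‖x + t • v - x‖ * ‖v‖ := by
            gcongr; exact hlip _ _
        _ = L * (t * ‖v‖) * ‖v‖ := by
            rw [add_sub_cancel_left, norm_smul, Real.norm_eq_abs, abs_of_nonneg ht.1]
    rw [inner_sub_left] at h1
    nlinarith [h1]
  have hint : (∫ t in (0:ℝ)..1, ⟪gradient f (x + t • v), v⟫) ≤
      ∫ t in (0:ℝ)..1, (⟪gradient f x, v⟫ + L * ‖v‖ ^ 2 * t) := by
    apply intervalIntegral.integral_mono_on (by norm_num)
      (hcont.intervalIntegrable 0 1)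
      ((continuous_const.add (continuous_const.mul continuous_id)).intervalIntegrable 0 1)
    exact hbound
  have hval : (∫ t in (0:ℝ)..1, (⟪gradient f x, v⟫ + L * ‖v‖ ^ 2 * t)) =
      ⟪gradient f x, v⟫ + L / 2 * ‖v‖ ^ 2 := by
    have hid : (∫ t in (0:ℝ)..1, t) = 1 / 2 := by
      simp
    rw [intervalIntegral.integral_add (intervalIntegrable_const)
      (IntervalIntegrable.const_mul intervalIntegral.intervalIntegrable_id _),
      intervalIntegral.integral_const_mul, hid, intervalIntegral.integral_const]
    simp
    ring
  have h := hftc.le.trans (hint.trans hval.le)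
  simp only [one_smul, zero_smul, add_zero, hv, add_sub_cancel] at h
  linarith

/-- Gradient norm bound for smooth bounded-below functions. -/
lemma grad_sq_le_infi (f : E → ℝ) (hdiff : Differentiable ℝ f)
    (hbdd : BddBelow (Set.range f)) (L : ℝ) (hL : 0 < L)
    (hlip : ∀ x y, ‖gradient f x - gradient f y‖ ≤ L * ‖x - y‖) (x : E) :
    ‖gradient f x‖ ^ 2 ≤ 2 * L * (f x - ⨅ y, f y) := by
  set g := gradient f x with hgdef
  set y := x - (1 / L) • g with hy
  have hdesc := descent_lemma f hdiff L hL.le hlip x y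
  have hyx : y - x = -((1 / L) • g) := by rw [hy]; abel
  have hinner : ⟪g, y - x⟫ = -(1 / L) * ‖g‖ ^ 2 := by
    rw [hyx, inner_neg_right, real_inner_smul_right, real_inner_self_eq_norm_sq]
    ring
  have hnorm : ‖y - x‖ ^ 2 = (1 / L) ^ 2 * ‖g‖ ^ 2 := by
    rw [hyx, norm_neg, norm_smul, mul_pow, Real.norm_eq_abs, sq_abs]
  have hinf : (⨅ y, f y) ≤ f y := ciInf_le (by
    obtain ⟨b, hb⟩ := hbdd
    exact ⟨b, fun z hz => by obtain ⟨w, rfl⟩ := hz; exact hb ⟨w, rfl⟩⟩) y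
  rw [hinner, hnorm] at hdesc
  have key : (1 / L) * ‖g‖ ^ 2 - L / 2 * ((1 / L) ^ 2 * ‖g‖ ^ 2) = ‖g‖ ^ 2 / (2 * L) := by
    field_simp
    ring
  have h2 : ‖g‖ ^ 2 / (2 * L) ≤ f x - ⨅ y, f y := by linarith
  rw [div_le_iff₀ (by positivity)] at h2
  linarith


/-- From the surrogate to f (smooth case):
(1 - λL_max)(f(wᵗ) - f(w*)) ≤ φ_t(zᵗ) - φ_t(z*) + λL_max ν,
with ν = inf f - (1/n)Σᵢ inf fᵢ. -/
theorem stmt_17 (d n : ℕ) (hn : 0 < n)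
    (f : Fin n → EuclideanSpace ℝ (Fin d) → ℝ)
    (hconv : ∀ i, ConvexOn ℝ Set.univ (f i))
    (hdiff : ∀ i, Differentiable ℝ (f i))
    (hbdd : ∀ i, BddBelow (Set.range (f i)))
    (Lmax : ℝ) (hLmaxpos : 0 < Lmax)
    (hsmooth : ∀ i x y, ‖gradient (f i) x - gradient (f i) y‖ ≤ Lmax * ‖x - y‖)
    (lam δ : ℝ) (hlam : 0 < lam) (hδ : 0 < δ) (hlamL : lam * Lmax < 1)
    (wstar : EuclideanSpace ℝ (Fin d))
    (hmin : ∀ w, (1 / (n : ℝ)) * ∑ i, f i wstar ≤ (1 / (n : ℝ)) * ∑ i, f i w)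
    (wt : EuclideanSpace ℝ (Fin d)) (st : Fin n → ℝ) :
    let φt : EuclideanSpace ℝ (Fin d) → (Fin n → ℝ) → ℝ := fun w s =>
      (1 / (n : ℝ)) * ∑ i, ((1 / 2) * (max (f i w - s i + δ) 0) ^ 2 /
          (δ + lam * ‖gradient (f i) wt‖ ^ 2) + s i)
    let ν : ℝ := (1 / (n : ℝ)) * ∑ i, f i wstar - (1 / (n : ℝ)) * ∑ i, ⨅ x, f i x
    (1 - lam * Lmax) *
        ((1 / (n : ℝ)) * ∑ i, f i wt - (1 / (n : ℝ)) * ∑ i, f i wstar) ≤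
      φt wt st - φt wstar (fun i => f i wstar) + lam * Lmax * ν := by
  intro φt ν
  have key : ∀ i : Fin n,
      f i wt - f i wstar - lam * Lmax * (f i wt - ⨅ x, f i x) ≤
      ((1 / 2) * (max (f i wt - st i + δ) 0) ^ 2 /
          (δ + lam * ‖gradient (f i) wt‖ ^ 2) + st i) -
      ((1 / 2) * (max (f i wstar - f i wstar + δ) 0) ^ 2 /
          (δ + lam * ‖gradient (f i) wt‖ ^ 2) + f i wstar) := by
    intro i
    set g := ‖gradient (f i) wt‖ ^ 2 with hg
    have hg0 : 0 ≤ g := sq_nonneg _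
    have hD : 0 < δ + lam * g := by positivity
    have hgrad : g ≤ 2 * Lmax * (f i wt - ⨅ x, f i x) :=
      grad_sq_le_infi (f i) (hdiff i) (hbdd i) Lmax hLmaxpos (hsmooth i) wt
    have hmaxs : max (f i wstar - f i wstar + δ) 0 = δ := by
      rw [sub_self, zero_add, max_eq_left hδ.le]
    -- lower bound at (wt, st)
    have h1 : f i wt + δ - (δ + lam * g) / 2 ≤
        (1 / 2) * (max (f i wt - st i + δ) 0) ^ 2 / (δ + lam * g) + st i := by
      rcases le_or_gt (f i wt - st i + δ) 0 with h | h
      · rw [max_eq_right h]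
        have : (0:ℝ) ≤ (1 / 2) * 0 ^ 2 / (δ + lam * g) := by positivity
        nlinarith
      · rw [max_eq_left h.le]
        rw [← sub_le_iff_le_add, le_div_iff₀ hD]
        nlinarith [sq_nonneg (f i wt - st i + δ - (δ + lam * g))]
    -- upper bound at (wstar, s*)
    have h2 : (1 / 2) * δ ^ 2 / (δ + lam * g) ≤ δ / 2 := by
      rw [div_le_iff₀ hD]
      nlinarith [mul_nonneg (mul_nonneg hδ.le hlam.le) hg0]
    have h3 : lam * g ≤ 2 * lam * Lmax * (f i wt - ⨅ x, f i x) := by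
      nlinarith
    rw [hmaxs]
    linarith
  have hsum := Finset.sum_le_sum (fun i (_ : i ∈ Finset.univ) => key i)
  rw [Finset.sum_sub_distrib, Finset.sum_sub_distrib, Finset.sum_sub_distrib,
    ← Finset.mul_sum, Finset.sum_sub_distrib] at hsum
  have hn' : (0:ℝ) < 1 / (n : ℝ) := by positivity
  have hmul := mul_le_mul_of_nonneg_left hsum hn'.le
  simp only [φt, ν]
  rw [mul_sub, mul_sub, mul_sub, mul_sub] at hmul
  nlinarith [hmul]
end
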